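/- (Key extraction for the 2/3-soundness scheme.) Let q be a prime, A an n×m matrix over 𝔽_q, and b ∈ 𝔽_q^n. Let Π_a = Π_{γ_a,Σ_a}, Π_b = Π_{γ_b,Σ_b}, Π_c = Π_{γ_c,Σ_c} be Hamming isometries of 𝔽_q^n, and let u_a, s_a, u_b, s_b, u_c ∈ 𝔽_q^m and e_b ∈ 𝔽_q^n. Suppose the three consistency equations hold: (i) Π_a = Π_c; (ii) Π_b(A(u_b + s_b)) = Π_a(A(u_a + s_a)); (iii) Π_b(A(u_b + s_b)) + Π_b(e_b) = Π_c(A u_c + b). Define s := (u_a + s_a) − u_c and e := Π_c^{-1}(Π_b(e_b)). Then A·s + e = b, and wt(e) = wt(e_b). -/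
import Mathlib

/-- The Hamming isometry `Π_{γ,Σ}` sending `v` to the vector whose `i`-th entry is
`γ (Σ i) * v (Σ i)`. -/
def HIso {q n : ℕ} (γ : Fin n → ZMod q) (σ : Equiv.Perm (Fin n)) :
    (Fin n → ZMod q) → (Fin n → ZMod q) :=
  fun v i => γ (σ i) * v (σ i)

/-- The Hamming weight of a vector: the number of nonzero coordinates. -/
def wt {q n : ℕ} (v : Fin n → ZMod q) : ℕ :=
  (Finset.univ.filter fun i => v i ≠ 0).card

lemma HIso_add {q n : ℕ} (γ : Fin n → ZMod q) (σ : Equiv.Perm (Fin n))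
    (v w : Fin n → ZMod q) : HIso γ σ (v + w) = HIso γ σ v + HIso γ σ w := by
  funext i; simp [HIso, mul_add]

lemma HIso_bijective {q n : ℕ} [Fact q.Prime] (γ : Fin n → ZMod q)
    (hγ : ∀ i, γ i ≠ 0) (σ : Equiv.Perm (Fin n)) :
    Function.Bijective (HIso γ σ) := by
  have : Function.LeftInverse (fun w i => (γ i)⁻¹ * w (σ.symm i)) (HIso γ σ) ∧
      Function.RightInverse (fun w i => (γ i)⁻¹ * w (σ.symm i)) (HIso γ σ) := by
    constructor
    · intro v; funext i
      simp [HIso, ← mul_assoc, inv_mul_cancel₀ (hγ _)]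
    · intro w; funext i
      simp [HIso, ← mul_assoc, mul_inv_cancel₀ (hγ _)]
  exact ⟨this.1.injective, this.2.surjective⟩

lemma wt_HIso {q n : ℕ} [Fact q.Prime] (γ : Fin n → ZMod q)
    (hγ : ∀ i, γ i ≠ 0) (σ : Equiv.Perm (Fin n)) (v : Fin n → ZMod q) :
    wt (HIso γ σ v) = wt v := by
  unfold wt
  apply Finset.card_bij (fun i _ => σ i)
  · intro i hi
    simp only [Finset.mem_filter, Finset.mem_univ, true_and] at hi ⊢
    intro h
    exact hi (by simp [HIso, h])
  · intro i _ j _ h; exact σ.injective h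
  · intro j hj
    refine ⟨σ.symm j, ?_, by simp⟩
    simp only [Finset.mem_filter, Finset.mem_univ, true_and] at hj ⊢
    simp only [HIso, Equiv.apply_symm_apply]
    exact mul_ne_zero (hγ _) hj

theorem key_extraction_two_thirds (q n m : ℕ) (hq : q.Prime)
    (A : Matrix (Fin n) (Fin m) (ZMod q)) (b : Fin n → ZMod q)
    (γa γb γc : Fin n → ZMod q)
    (hγa : ∀ i, γa i ≠ 0) (hγb : ∀ i, γb i ≠ 0) (hγc : ∀ i, γc i ≠ 0)
    (σa σb σc : Equiv.Perm (Fin n))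
    (ua sa ub sb uc : Fin m → ZMod q) (eb : Fin n → ZMod q)
    (h1 : HIso γa σa = HIso γc σc)
    (h2 : HIso γb σb (A.mulVec (ub + sb)) = HIso γa σa (A.mulVec (ua + sa)))
    (h3 : HIso γb σb (A.mulVec (ub + sb)) + HIso γb σb eb
            = HIso γc σc (A.mulVec uc + b)) :
    A.mulVec ((ua + sa) - uc) + Function.invFun (HIso γc σc) (HIso γb σb eb) = b ∧
    wt (Function.invFun (HIso γc σc) (HIso γb σb eb)) = wt eb := by
  haveI : Fact q.Prime := ⟨hq⟩
  have hbij := HIso_bijective γc hγc σc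
  set e := Function.invFun (HIso γc σc) (HIso γb σb eb) with he
  have hce : HIso γc σc e = HIso γb σb eb :=
    Function.rightInverse_invFun hbij.surjective _
  have key : HIso γc σc (A.mulVec (ua + sa) + e) = HIso γc σc (A.mulVec uc + b) := by
    rw [HIso_add, hce, ← h3, h2, h1]
  have key2 : A.mulVec (ua + sa) + e = A.mulVec uc + b := hbij.injective key
  constructor
  · rw [Matrix.mulVec_sub]
    have : A.mulVec (ua + sa) - A.mulVec uc + e
        = A.mulVec (ua + sa) + e - A.mulVec uc := by ring
    rw [this, key2]; ring
  · calc wt e = wt (HIso γc σc e) := (wt_HIso γc hγc σc e).symm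
      _ = wt (HIso γb σb eb) := by rw [hce]
      _ = wt eb := wt_HIso γb hγb σb eb
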